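/- The mixture density p(τ) = [(1+γ_min τ)e^{-γ_min τ} − (1+γ_max τ)e^{-γ_max τ}] / [(γ_max − γ_min) τ²] is a valid probability density: it is nonnegative for all τ > 0 and integrates to 1 over (0, ∞). -/

import Mathlib

open Real MeasureTheory

/-- The closed-form mixture density is a valid probability density on `(0, ∞)`:
it is nonnegative and integrates to `1`. -/
theorem mixture_density_is_probability_density
    (gmin gmax : ℝ) (h0 : 0 < gmin) (h : gmin < gmax) :
    (∀ τ : ℝ, 0 < τ →
        0 ≤ ((1 + gmin * τ) * Real.exp (-gmin * τ)
              - (1 + gmax * τ) * Real.exp (-gmax * τ)) / ((gmax - gmin) * τ ^ 2)) ∧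
      (∫ τ in Set.Ioi (0 : ℝ),
          ((1 + gmin * τ) * Real.exp (-gmin * τ)
            - (1 + gmax * τ) * Real.exp (-gmax * τ)) / ((gmax - gmin) * τ ^ 2)) = 1 := by
  have hba : 0 < gmax - gmin := sub_pos.mpr h
  -- derivative of the basic function
  have hexp : ∀ x : ℝ, HasDerivAt (fun y : ℝ => Real.exp (-y)) (-Real.exp (-x)) x := by
    intro x
    simpa using (hasDerivAt_neg x).exp
  -- the function (1+x)e^{-x} is antitone on [0,∞)
  have hanti : AntitoneOn (fun x : ℝ => (1 + x) * Real.exp (-x)) (Set.Ici 0) := by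
    have hd : ∀ x : ℝ, HasDerivAt (fun y : ℝ => (1 + y) * Real.exp (-y))
        (1 * Real.exp (-x) + (1 + x) * (-Real.exp (-x))) x := by
      intro x
      exact ((hasDerivAt_id x).const_add 1).mul (hexp x)
    apply antitoneOn_of_deriv_nonpos (convex_Ici 0)
    · exact (continuous_const.add continuous_id).mul
        (Real.continuous_exp.comp continuous_neg) |>.continuousOn
    · intro x _
      exact (hd x).differentiableAt.differentiableWithinAt
    · intro x hx
      rw [interior_Ici] at hx
      rw [(hd x).deriv]
      nlinarith [Real.exp_pos (-x), hx.out]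
  -- nonnegativity
  have hnonneg : ∀ τ : ℝ, 0 < τ →
      0 ≤ ((1 + gmin * τ) * Real.exp (-gmin * τ)
            - (1 + gmax * τ) * Real.exp (-gmax * τ)) / ((gmax - gmin) * τ ^ 2) := by
    intro τ hτ
    apply div_nonneg _ (le_of_lt (mul_pos hba (pow_pos hτ 2)))
    have h1 : (gmin * τ : ℝ) ∈ Set.Ici (0 : ℝ) := mul_nonneg h0.le hτ.le
    have h2 : (gmax * τ : ℝ) ∈ Set.Ici (0 : ℝ) := mul_nonneg (h0.trans h).le hτ.le
    have h3 : gmin * τ ≤ gmax * τ := by nlinarith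
    have := hanti h1 h2 h3
    simp only [neg_mul] at *
    linarith
  refine ⟨hnonneg, ?_⟩
  -- antiderivative
  set G : ℝ → ℝ := fun τ =>
    if τ = 0 then -1 else (Real.exp (-gmax * τ) - Real.exp (-gmin * τ)) / ((gmax - gmin) * τ)
    with hG
  have hG0 : G 0 = -1 := by simp [hG]
  have hGx : ∀ x : ℝ, x ≠ 0 →
      G x = (Real.exp (-gmax * x) - Real.exp (-gmin * x)) / ((gmax - gmin) * x) := by
    intro x hx; simp [hG, hx]
  -- derivative of G on (0, ∞)
  have hderiv : ∀ x ∈ Set.Ioi (0 : ℝ), HasDerivAt G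
      (((1 + gmin * x) * Real.exp (-gmin * x)
        - (1 + gmax * x) * Real.exp (-gmax * x)) / ((gmax - gmin) * x ^ 2)) x := by
    intro x hx
    have hx0 : (0 : ℝ) < x := hx
    have hne : (gmax - gmin) * x ≠ 0 := by positivity
    have hnum : HasDerivAt (fun τ : ℝ => Real.exp (-gmax * τ) - Real.exp (-gmin * τ))
        ((-gmax) * Real.exp (-gmax * x) - (-gmin) * Real.exp (-gmin * x)) x := by
      have h1 : HasDerivAt (fun τ : ℝ => Real.exp (-gmax * τ)) ((-gmax) * Real.exp (-gmax * x)) x := by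
        simpa [mul_comm] using ((hasDerivAt_id x).const_mul (-gmax)).exp
      have h2 : HasDerivAt (fun τ : ℝ => Real.exp (-gmin * τ)) ((-gmin) * Real.exp (-gmin * x)) x := by
        simpa [mul_comm] using ((hasDerivAt_id x).const_mul (-gmin)).exp
      exact h1.sub h2
    have hden : HasDerivAt (fun τ : ℝ => (gmax - gmin) * τ) (gmax - gmin) x := by
      simpa using (hasDerivAt_id x).const_mul (gmax - gmin)
    have hdiv := hnum.div hden hne
    have heq : G =ᶠ[nhds x]
        fun τ => (Real.exp (-gmax * τ) - Real.exp (-gmin * τ)) / ((gmax - gmin) * τ) := by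
      filter_upwards [eventually_ne_nhds (ne_of_gt hx0)] with τ hτ
      exact hGx τ hτ
    have := hdiv.congr_of_eventuallyEq heq
    refine this.congr_deriv ?_
    rw [div_eq_div_iff (pow_pos (mul_pos hba hx0) 2).ne' (mul_pos hba (pow_pos hx0 2)).ne']
    ring
  -- continuity at 0 from the right
  have hcont : ContinuousWithinAt G (Set.Ici (0 : ℝ)) 0 := by
    have hk : HasDerivAt (fun τ : ℝ => (Real.exp (-gmax * τ) - Real.exp (-gmin * τ)) / (gmax - gmin))
        (-1) (0 : ℝ) := by
      have hnum : HasDerivAt (fun τ : ℝ => Real.exp (-gmax * τ) - Real.exp (-gmin * τ))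
          ((-gmax) * Real.exp (-gmax * (0:ℝ)) - (-gmin) * Real.exp (-gmin * (0:ℝ))) 0 := by
        have h1 : HasDerivAt (fun τ : ℝ => Real.exp (-gmax * τ)) ((-gmax) * Real.exp (-gmax * (0:ℝ))) 0 := by
          simpa [mul_comm] using ((hasDerivAt_id (0:ℝ)).const_mul (-gmax)).exp
        have h2 : HasDerivAt (fun τ : ℝ => Real.exp (-gmin * τ)) ((-gmin) * Real.exp (-gmin * (0:ℝ))) 0 := by
          simpa [mul_comm] using ((hasDerivAt_id (0:ℝ)).const_mul (-gmin)).exp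
        exact h1.sub h2
      have := hnum.div_const (gmax - gmin)
      refine this.congr_deriv ?_
      rw [div_eq_iff hba.ne']
      simp only [mul_zero, Real.exp_zero]
      ring
    have hslope := hasDerivAt_iff_tendsto_slope.mp hk
    rw [ContinuousWithinAt, hG0]
    have hIci : Set.Ici (0:ℝ) = {0} ∪ Set.Ioi 0 := by
      ext y; simp [le_iff_lt_or_eq, or_comm, eq_comm]
    rw [hIci, nhdsWithin_union, nhdsWithin_singleton]
    rw [Filter.tendsto_sup]
    constructor
    · rw [hG0.symm]; exact tendsto_pure_nhds G 0
    · have hmono : nhdsWithin (0:ℝ) (Set.Ioi 0) ≤ nhdsWithin 0 {(0:ℝ)}ᶜ :=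
        nhdsWithin_mono 0 (fun y hy => ne_of_gt hy)
      refine (hslope.mono_left hmono).congr' ?_
      filter_upwards [self_mem_nhdsWithin] with y hy
      have hy0 : y ≠ 0 := ne_of_gt hy
      simp only [slope_def_field]
      rw [hGx y hy0]
      field_simp
      simp only [mul_zero, neg_zero, Real.exp_zero, sub_self, sub_zero]
      ring
  -- limit at infinity
  have htop : Filter.Tendsto G Filter.atTop (nhds 0) := by
    have he : ∀ c : ℝ, 0 < c → Filter.Tendsto (fun τ : ℝ => Real.exp (-c * τ))
        Filter.atTop (nhds 0) := by
      intro c hc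
      apply Real.tendsto_exp_atBot.comp
      exact Filter.Tendsto.const_mul_atTop_of_neg (neg_neg_iff_pos.mpr hc) Filter.tendsto_id
    have hnum : Filter.Tendsto (fun τ : ℝ => Real.exp (-gmax * τ) - Real.exp (-gmin * τ))
        Filter.atTop (nhds 0) := by
      simpa using (he gmax (h0.trans h)).sub (he gmin h0)
    have hden : Filter.Tendsto (fun τ : ℝ => (gmax - gmin) * τ) Filter.atTop Filter.atTop :=
      Filter.Tendsto.const_mul_atTop hba Filter.tendsto_id
    have := hnum.div_atTop hden
    refine this.congr' ?_
    filter_upwards [Filter.eventually_gt_atTop (0:ℝ)] with τ hτ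
    exact (hGx τ (ne_of_gt hτ)).symm
  have := integral_Ioi_of_hasDerivAt_of_nonneg hcont hderiv
    (fun x hx => hnonneg x hx) htop
  rw [this, hG0]
  ring
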